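/- arXiv:2509.23826 — 8 statements merged into one kernel-verified Lean document; each statement's English description precedes it below -/
import Mathlib

section
/- Let Δ_{l,k}(t) be the Hankel determinants of the time-evolved moments s_k(t) = ∫ λ^k e^{−t/(2λ)} dρ_0(λ), and let Γ_{l,k}(t) be the k×k determinant whose first row is (s_l, s_{l+1}, …, s_{l+k−1}) and whose i-th row (i ≥ 2) is (s_{l+i}, s_{l+i+1}, …, s_{l+i+k−1}). Then d/dt Δ_{l,k}(t) = −(1/2) Γ_{l−1,k}(t) for l ≥ 0, under hypotheses guaranteeing differentiability. -/
open MeasureTheory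

/-- The Hankel determinant `Δ_{l,k} = det (s_{l+i+j})_{0 ≤ i,j ≤ k-1}`, with `Δ_{l,0} = 1`. -/
noncomputable def hankelDet (s : ℤ → ℝ) (l : ℤ) (k : ℕ) : ℝ :=
  (Matrix.of fun i j : Fin k => s (l + (i.1 : ℤ) + (j.1 : ℤ))).det

/-- The determinant `Γ_{l,k}`: the `k×k` determinant whose first row is
`(s_l, …, s_{l+k-1})` and whose `i`-th row (`i ≥ 2`, i.e. 0-based row `r ≥ 1`) is
`(s_{l+i}, …, s_{l+i+k-1})` (the offset `l+1` is skipped); `Γ_{l,0} = 0`. -/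
noncomputable def gammaDet (s : ℤ → ℝ) (l : ℤ) (k : ℕ) : ℝ :=
  if k = 0 then 0 else
    (Matrix.of fun i j : Fin k =>
      s (l + (if i.1 = 0 then 0 else (i.1 : ℤ) + 1) + (j.1 : ℤ))).det

/-- Time evolution of the Hankel determinants of the time-evolved moments:
`d/dt Δ_{l,k}(t) = -(1/2) Γ_{l-1,k}(t)` for `l ≥ 0`. -/
theorem stmt3 (ρ0 : Measure ℝ) (ε : ℝ) (hε : 0 < ε)
    (hsupp : ∀ᵐ x ∂ρ0, ε ≤ x)
    (hint : ∀ (m : ℤ) (t : ℝ),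
      Integrable (fun x : ℝ => x ^ m * Real.exp (-t / (2 * x))) ρ0)
    (s : ℤ → ℝ → ℝ)
    (hs : ∀ (m : ℤ) (t : ℝ), s m t = ∫ x, x ^ m * Real.exp (-t / (2 * x)) ∂ρ0)
    (l : ℤ) (hl : 0 ≤ l) (k : ℕ) (t : ℝ) :
    HasDerivAt (fun τ => hankelDet (fun m => s m τ) l k)
      (-(1 / 2) * gammaDet (fun m => s m t) (l - 1) k) t := by
  classical
  -- Step 1: each moment has derivative `-(1/2) s_{m-1}`.
  have hderiv : ∀ (m : ℤ) (τ : ℝ),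
      HasDerivAt (fun u => s m u) (-(1/2) * s (m-1) τ) τ := by
    intro m τ
    have key := hasDerivAt_integral_of_dominated_loc_of_deriv_le (μ := ρ0)
      (F := fun u (x : ℝ) => x ^ m * Real.exp (-u / (2*x)))
      (F' := fun u (x : ℝ) => -(1/2) * (x ^ (m-1) * Real.exp (-u / (2*x))))
      (x₀ := τ) (bound := fun x : ℝ => (1/2) * (x ^ (m-1) * Real.exp (-(τ-1) / (2*x))))
      (Metric.ball_mem_nhds τ one_pos)
      (Filter.Eventually.of_forall fun u => (hint m u).aestronglyMeasurable)
      (hint m τ)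
      ((hint (m-1) τ).aestronglyMeasurable.const_mul _)
      ?_ ((hint (m-1) (τ-1)).const_mul _) ?_
    · have h2 := key.2
      have heq : (∫ x, -(1/2) * (x ^ (m-1) * Real.exp (-τ / (2*x))) ∂ρ0)
          = -(1/2) * s (m-1) τ := by
        rw [integral_const_mul, hs]
      rw [heq] at h2
      have hfun : (fun u => s m u) = fun u => ∫ x, x ^ m * Real.exp (-u / (2*x)) ∂ρ0 := by
        funext u; exact hs m u
      rw [hfun]
      exact h2
    · -- bound
      filter_upwards [hsupp] with x hx
      intro u hu
      have hx0 : (0:ℝ) < x := lt_of_lt_of_le hε hx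
      have hzp : (0:ℝ) < x ^ (m-1) := zpow_pos hx0 _
      have hnorm : ‖-(1/2) * (x ^ (m-1) * Real.exp (-u / (2*x)))‖
          = (1/2) * (x ^ (m-1) * Real.exp (-u / (2*x))) := by
        rw [Real.norm_eq_abs, abs_mul, abs_of_nonneg (by positivity : (0:ℝ) ≤ x ^ (m-1) * Real.exp (-u / (2*x)))]
        norm_num
      rw [hnorm]
      have hu' : τ - 1 ≤ u := by
        rw [Metric.mem_ball, Real.dist_eq, abs_lt] at hu
        linarith
      have hexp : Real.exp (-u / (2*x)) ≤ Real.exp (-(τ-1) / (2*x)) := by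
        apply Real.exp_le_exp.mpr
        apply div_le_div_of_nonneg_right (by linarith) (by positivity)
      have hxx : (0:ℝ) ≤ x ^ (m-1) := le_of_lt hzp
      exact mul_le_mul_of_nonneg_left (mul_le_mul_of_nonneg_left hexp hxx) (by norm_num)
    · -- differentiability
      filter_upwards [hsupp] with x hx
      intro u hu
      have hx0 : (0:ℝ) < x := lt_of_lt_of_le hε hx
      have hxne : x ≠ 0 := ne_of_gt hx0
      have h1 : HasDerivAt (fun u : ℝ => -u / (2*x)) (-1 / (2*x)) u := by
        simpa using ((hasDerivAt_id u).neg.div_const (2*x))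
      have h2 := (h1.exp).const_mul (x ^ m)
      refine h2.congr_deriv ?_
      rw [zpow_sub_one₀ hxne]
      field_simp
  -- Step 2
  by_cases hk : k = 0
  · subst hk
    have h1 : (fun τ => hankelDet (fun m => s m τ) l 0) = fun _ => (1:ℝ) := by
      funext τ; simp [hankelDet, Matrix.det_fin_zero]
    rw [h1]
    simpa [gammaDet] using hasDerivAt_const t (1:ℝ)
  · have hkpos : 0 < k := Nat.pos_of_ne_zero hk
    set c : Equiv.Perm (Fin k) → ℝ := fun σ => ((Equiv.Perm.sign σ : ℤ) : ℝ) with hc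
    -- derivative via Leibniz formula
    have key : HasDerivAt
        (fun τ => ∑ σ : Equiv.Perm (Fin k), c σ * ∏ i, s (l + ((σ i).1 : ℤ) + (i.1 : ℤ)) τ)
        (∑ σ : Equiv.Perm (Fin k), c σ * ∑ i : Fin k,
          (∏ j ∈ Finset.univ.erase i, s (l + ((σ j).1 : ℤ) + (j.1 : ℤ)) t) •
            (-(1/2) * s (l + ((σ i).1 : ℤ) + (i.1 : ℤ) - 1) t)) t := by
      apply HasDerivAt.fun_sum
      intro σ _
      exact (HasDerivAt.fun_finsetProd (fun i _ => hderiv (l + ((σ i).1 : ℤ) + (i.1 : ℤ)) t)).const_mul _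
    have hfun : (fun τ => hankelDet (fun m => s m τ) l k)
        = fun τ => ∑ σ : Equiv.Perm (Fin k), c σ * ∏ i, s (l + ((σ i).1 : ℤ) + (i.1 : ℤ)) τ := by
      funext τ
      rw [hankelDet, Matrix.det_apply']
      rfl
    rw [hfun]
    convert key using 1
    -- Algebraic identity: the derivative sum equals -(1/2) Γ_{l-1,k}
    set N : Fin k → Matrix (Fin k) (Fin k) ℝ := fun i =>
      Matrix.of fun r c : Fin k =>
        if c = i then s (l + (r.1 : ℤ) + (c.1 : ℤ) - 1) t else s (l + (r.1 : ℤ) + (c.1 : ℤ)) t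
      with hN
    have claim1 : ∀ (σ : Equiv.Perm (Fin k)) (i : Fin k),
        (∏ j ∈ Finset.univ.erase i, s (l + ((σ j).1 : ℤ) + (j.1 : ℤ)) t) •
            (-(1/2) * s (l + ((σ i).1 : ℤ) + (i.1 : ℤ) - 1) t)
          = -(1/2) * ∏ j, N i (σ j) j := by
      intro σ i
      have hp : ∏ j, N i (σ j) j
          = N i (σ i) i * ∏ j ∈ Finset.univ.erase i, N i (σ j) j :=
        (Finset.mul_prod_erase Finset.univ _ (Finset.mem_univ i)).symm
      have h1 : N i (σ i) i = s (l + ((σ i).1 : ℤ) + (i.1 : ℤ) - 1) t := by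
        simp [hN]
      have h2 : ∀ j ∈ Finset.univ.erase i, N i (σ j) j = s (l + ((σ j).1 : ℤ) + (j.1 : ℤ)) t := by
        intro j hj
        have : j ≠ i := (Finset.mem_erase.mp hj).1
        simp [hN, this]
      rw [hp, h1, Finset.prod_congr rfl h2, smul_eq_mul]
      ring
    have hD : (∑ σ : Equiv.Perm (Fin k), c σ * ∑ i : Fin k,
          (∏ j ∈ Finset.univ.erase i, s (l + ((σ j).1 : ℤ) + (j.1 : ℤ)) t) •
            (-(1/2) * s (l + ((σ i).1 : ℤ) + (i.1 : ℤ) - 1) t))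
        = -(1/2) * ∑ i : Fin k, (N i).det := by
      have : ∀ σ : Equiv.Perm (Fin k), c σ * ∑ i : Fin k,
          (∏ j ∈ Finset.univ.erase i, s (l + ((σ j).1 : ℤ) + (j.1 : ℤ)) t) •
            (-(1/2) * s (l + ((σ i).1 : ℤ) + (i.1 : ℤ) - 1) t)
          = ∑ i : Fin k, -(1/2) * (c σ * ∏ j, N i (σ j) j) := by
        intro σ
        rw [Finset.mul_sum]
        refine Finset.sum_congr rfl fun i _ => ?_
        rw [claim1 σ i]; ring
      rw [Finset.sum_congr rfl fun σ _ => this σ, Finset.sum_comm]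
      rw [Finset.mul_sum]
      refine Finset.sum_congr rfl fun i _ => ?_
      rw [Matrix.det_apply', Finset.mul_sum]
    rw [hD]
    -- all N i with i ≠ 0 have two equal columns
    set i₀ : Fin k := ⟨0, hkpos⟩ with hi₀
    have hzero : ∀ i : Fin k, i ≠ i₀ → (N i).det = 0 := by
      intro i hi
      have hipos : 0 < i.1 := by
        rcases Nat.eq_zero_or_pos i.1 with h | h
        · exact absurd (Fin.ext h) hi
        · exact h
      set i' : Fin k := ⟨i.1 - 1, by omega⟩ with hi'
      have hne : i ≠ i' := by
        intro h
        have := congrArg Fin.val h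
        simp [hi'] at this
        omega
      refine Matrix.det_zero_of_column_eq hne fun r => ?_
      have h1 : N i r i = s (l + (r.1 : ℤ) + (i.1 : ℤ) - 1) t := by simp [hN]
      have h2 : N i r i' = s (l + (r.1 : ℤ) + ((i'.1 : ℕ) : ℤ)) t := by
        simp [hN, hne.symm, Ne.symm hne]
      rw [h1, h2]
      congr 1
      have : ((i'.1 : ℕ) : ℤ) = (i.1 : ℤ) - 1 := by
        simp [hi']
        omega
      rw [this]
      ring
    have hsum : ∑ i : Fin k, (N i).det = (N i₀).det := by
      apply Finset.sum_eq_single i₀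
      · intro i _ hi; exact hzero i hi
      · intro h; exact absurd (Finset.mem_univ i₀) h
    rw [hsum]
    -- N i₀ is the transpose of the Γ matrix
    have hmat : N i₀ = (Matrix.of fun i j : Fin k =>
        s ((l - 1) + (if i.1 = 0 then 0 else (i.1 : ℤ) + 1) + (j.1 : ℤ)) t).transpose := by
      ext r c
      simp only [Matrix.transpose_apply, Matrix.of_apply, hN]
      by_cases hc : c = i₀
      · have hc0 : c.1 = 0 := by rw [hc]
        have hc0' : ((c.1 : ℕ) : ℤ) = 0 := by exact_mod_cast hc0
        rw [if_pos hc, if_pos hc0, hc0']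
        congr 1
        ring
      · have hc0 : c.1 ≠ 0 := fun h => hc (Fin.ext h)
        rw [if_neg hc, if_neg hc0]
        congr 1
        ring
    have hG : (N i₀).det = gammaDet (fun m => s m t) (l - 1) k := by
      rw [gammaDet, if_neg hk, hmat, Matrix.det_transpose]
    rw [hG]
end

section
/- The Hankel determinants Δ and the shifted determinants Γ satisfy the bilinear identities Δ_{l−1,k} Δ_{l+2,k−1} = Δ_{l+1,k−1} Γ_{l−1,k} − Δ_{l,k} Γ_{l,k−1} and Δ_{l−1,k+1} Δ_{l+2,k−1} = Δ_{l+1,k} Γ_{l−1,k} − Δ_{l,k} Γ_{l,k}, whenever all entries are defined. -/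
namespace Matrix

section DesnanotJacobi

variable {n R : Type*} [Fintype n] [DecidableEq n] [CommRing R]

theorem det_one_updateCol_updateCol {j₁ j₂ : n} (hj : j₁ ≠ j₂) (c₁ c₂ : n → R) :
    (((1 : Matrix n n R).updateCol j₁ c₁).updateCol j₂ c₂).det =
      c₁ j₁ * c₂ j₂ - c₁ j₂ * c₂ j₁ := by
  let P : Matrix n (Fin 2) R :=
    of fun r => ![c₁ r - (Pi.single j₁ 1 : n → R) r, c₂ r - (Pi.single j₂ 1 : n → R) r]
  let Q : Matrix (Fin 2) n R := of ![Pi.single j₁ 1, Pi.single j₂ 1]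
  have hPQ : ((1 : Matrix n n R).updateCol j₁ c₁).updateCol j₂ c₂ = 1 + P * Q := by
    ext r c
    rcases eq_or_ne c j₂ with rfl | h₂
    · simp [P, Q, mul_apply, Fin.sum_univ_two, hj, one_apply, Pi.single_apply]
    rcases eq_or_ne c j₁ with rfl | h₁
    · simp [P, Q, mul_apply, Fin.sum_univ_two, h₂, one_apply, Pi.single_apply]
    · simp [P, Q, mul_apply, Fin.sum_univ_two, h₁, h₂]
  rw [hPQ, det_one_add_mul_comm, det_fin_two]
  simp [P, Q, hj, hj.symm, Pi.single_apply]
  ring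

theorem det_mul_det_updateCol_single_updateCol_single_of_isLeftRegular (A : Matrix n n R)
    (hA : IsLeftRegular A.det) {j₁ j₂ : n} (hj : j₁ ≠ j₂) (i₁ i₂ : n) :
    A.det * ((A.updateCol j₁ (Pi.single i₁ 1)).updateCol j₂ (Pi.single i₂ 1)).det =
      (A.updateCol j₁ (Pi.single i₁ 1)).det * (A.updateCol j₂ (Pi.single i₂ 1)).det -
        (A.updateCol j₂ (Pi.single i₁ 1)).det * (A.updateCol j₁ (Pi.single i₂ 1)).det := by
  apply hA
  have hprod := det_mul A (((1 : Matrix n n R).updateCol j₁ (cramer A (Pi.single i₁ 1))).updateCol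
    j₂ (cramer A (Pi.single i₂ 1)))
  rw [mul_updateCol, mul_updateCol, mul_one, mulVec_cramer, mulVec_cramer, det_updateCol_smul,
    updateCol_comm A hj, det_updateCol_smul, updateCol_comm A hj.symm,
    det_one_updateCol_updateCol hj] at hprod
  simp only [cramer_apply] at hprod
  linear_combination hprod

open Polynomial in
theorem det_mul_det_updateCol_single_updateCol_single (A : Matrix n n R) {j₁ j₂ : n}
    (hj : j₁ ≠ j₂) (i₁ i₂ : n) :
    A.det * ((A.updateCol j₁ (Pi.single i₁ 1)).updateCol j₂ (Pi.single i₂ 1)).det =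
      (A.updateCol j₁ (Pi.single i₁ 1)).det * (A.updateCol j₂ (Pi.single i₂ 1)).det -
        (A.updateCol j₂ (Pi.single i₁ 1)).det * (A.updateCol j₁ (Pi.single i₂ 1)).det := by
  have hreg : IsRegular ((X : R[X]) • (1 : Matrix n n R[X]) + A.map C).det :=
    Monic.isRegular (leadingCoeff_det_X_one_add_C A)
  have h := congrArg (evalRingHom 0)
    (det_mul_det_updateCol_single_updateCol_single_of_isLeftRegular _ hreg.left hj i₁ i₂)
  have heval : ((X : R[X]) • (1 : Matrix n n R[X]) + A.map C).map (evalRingHom 0) = A := by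
    ext i j
    by_cases h : i = j <;> simp [h]
  have hsingle : ∀ i : n, evalRingHom (0 : R) ∘ (Pi.single i 1 : n → R[X]) = Pi.single i 1 := by
    intro i
    ext r
    by_cases h : r = i <;> simp [h]
  simpa only [map_sub, map_mul, RingHom.map_det, RingHom.mapMatrix_apply, map_updateCol,
    hsingle, heval] using h

end DesnanotJacobi

section Cofactor

variable {n : ℕ} {R : Type*} [CommRing R]

theorem det_updateCol_single_eq_submatrix (M : Matrix (Fin (n + 1)) (Fin (n + 1)) R)
    (i j : Fin (n + 1)) :
    (M.updateCol j (Pi.single i 1)).det =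
      (-1) ^ (i + j : ℕ) * (M.submatrix i.succAbove j.succAbove).det := by
  rw [← cramer_apply, cramer_eq_adjugate_mulVec, mulVec_single_one, col_apply,
    adjugate_fin_succ_eq_det_submatrix]

theorem det_updateCol_single_updateCol_single_eq_submatrix
    (M : Matrix (Fin (n + 2)) (Fin (n + 2)) R) {i₁ j₁ : Fin (n + 2)} (i₂ j₂ : Fin (n + 2))
    (i₁' j₁' : Fin (n + 1)) (hi : i₂.succAbove i₁' = i₁) (hj : j₂.succAbove j₁' = j₁) :
    ((M.updateCol j₁ (Pi.single i₁ 1)).updateCol j₂ (Pi.single i₂ 1)).det =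
      (-1) ^ (i₁' + j₁' + i₂ + j₂ : ℕ) *
        (M.submatrix (i₂.succAbove ∘ i₁'.succAbove) (j₂.succAbove ∘ j₁'.succAbove)).det := by
  subst hi hj
  have hsub : (M.updateCol (j₂.succAbove j₁') (Pi.single (i₂.succAbove i₁') 1)).submatrix
      i₂.succAbove j₂.succAbove =
        (M.submatrix i₂.succAbove j₂.succAbove).updateCol j₁' (Pi.single i₁' 1) := by
    ext r c
    by_cases hc : c = j₁' <;> simp [Pi.single_apply, hc]
  rw [det_updateCol_single_eq_submatrix, hsub, det_updateCol_single_eq_submatrix,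
    submatrix_submatrix]
  ring

end Cofactor

end Matrix

open Matrix

theorem Fin.val_one_succAbove {n : ℕ} (i : Fin (n + 1)) :
    ((1 : Fin (n + 2)).succAbove i : ℕ) = if (i : ℕ) = 0 then 0 else (i : ℕ) + 1 := by
  rcases Fin.eq_zero_or_eq_succ i with rfl | ⟨i, rfl⟩ <;> simp

section Hankel

variable (s : ℤ → ℝ)

theorem det_submatrix_hankel {N q : ℕ} (b : ℤ) (f g : Fin q → Fin N) (c d : ℕ)
    (hf : ∀ i, (f i : ℕ) = i + c) (hg : ∀ j, (g j : ℕ) = j + d) :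
    ((of fun i j : Fin N => s (b + i + j)).submatrix f g).det = hankelDet s (b + c + d) q := by
  unfold hankelDet
  congr 1
  ext i j
  simp only [submatrix_apply, of_apply, hf, hg]
  push_cast
  ring_nf

theorem det_submatrix_gamma {N q : ℕ} (b : ℤ) (f g : Fin (q + 1) → Fin N) (c d : ℕ)
    (hf : ∀ i, (f i : ℕ) = (if (i : ℕ) = 0 then 0 else (i : ℕ) + 1) + c)
    (hg : ∀ j, (g j : ℕ) = j + d) :
    ((of fun i j : Fin N => s (b + i + j)).submatrix f g).det = gammaDet s (b + c + d) (q + 1) := by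
  unfold gammaDet
  rw [if_neg q.succ_ne_zero]
  congr 1
  ext i j
  simp only [submatrix_apply, of_apply, hf, hg]
  push_cast
  ring_nf

theorem hankelDet_mul_hankelDet_pred (l : ℤ) (k : ℕ) :
    hankelDet s (l - 1) (k + 2) * hankelDet s (l + 2) (k + 1) =
      hankelDet s (l + 1) (k + 1) * gammaDet s (l - 1) (k + 2) -
        hankelDet s l (k + 2) * gammaDet s l (k + 1) := by
  set F := of fun i j : Fin (k + 3) => s (l - 2 + i + j)
  have key := det_mul_det_updateCol_single_updateCol_single
    (F.updateCol 0 (Pi.single (Fin.last _) 1)) (zero_ne_one : (0 : Fin (k + 3)) ≠ 1) 0 1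
  simp only [updateCol_idem] at key
  have h₀ : (F.updateCol 0 (Pi.single (Fin.last _) 1)).det =
      (-1) ^ (k + 2) * hankelDet s (l - 1) (k + 2) := by
    rw [det_updateCol_single_eq_submatrix, det_submatrix_hankel s _ _ _ 0 1 (by simp) (by simp)]
    simp only [Fin.val_zero, Fin.val_last]
    ring_nf
  have h₁ : ((F.updateCol 0 (Pi.single 0 1)).updateCol 1 (Pi.single 1 1)).det =
      hankelDet s (l + 2) (k + 1) := by
    rw [det_updateCol_single_updateCol_single_eq_submatrix F 1 1 0 0
      Fin.one_succAbove_zero Fin.one_succAbove_zero,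
      det_submatrix_hankel s _ _ _ 2 2 (by simp) (by simp)]
    simp only [Fin.val_zero, Fin.val_one]
    ring_nf
  have h₂ : (F.updateCol 0 (Pi.single 0 1)).det = hankelDet s l (k + 2) := by
    rw [det_updateCol_single_eq_submatrix, det_submatrix_hankel s _ _ _ 1 1 (by simp) (by simp)]
    simp only [Fin.val_zero]
    ring_nf
  have h₃ : ((F.updateCol 0 (Pi.single (Fin.last _) 1)).updateCol 1 (Pi.single 1 1)).det =
      (-1) ^ (k + 3) * gammaDet s l (k + 1) := by
    rw [det_updateCol_single_updateCol_single_eq_submatrix F 1 1 (Fin.last _) 0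
      (by ext; simp [Fin.val_one_succAbove]) Fin.one_succAbove_zero,
      det_submatrix_gamma s _ _ _ 0 2 (by simp [Fin.val_one_succAbove]) (by simp)]
    simp only [Fin.val_zero, Fin.val_one, Fin.val_last]
    ring_nf
  have h₄ : ((F.updateCol 0 (Pi.single (Fin.last _) 1)).updateCol 1 (Pi.single 0 1)).det =
      (-1) ^ (k + 2) * hankelDet s (l + 1) (k + 1) := by
    rw [det_updateCol_single_updateCol_single_eq_submatrix F 0 1 (Fin.last _) 0
      (by simp) Fin.one_succAbove_zero,
      det_submatrix_hankel s _ _ _ 1 2 (by simp) (by simp)]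
    simp only [Fin.val_zero, Fin.val_one, Fin.val_last]
    ring_nf
  have h₅ : (F.updateCol 0 (Pi.single 1 1)).det = -gammaDet s (l - 1) (k + 2) := by
    rw [det_updateCol_single_eq_submatrix,
      det_submatrix_gamma s _ _ _ 0 1 (by simp [Fin.val_one_succAbove]) (by simp)]
    simp only [Fin.val_zero, Fin.val_one]
    ring_nf
  rw [h₀, h₁, h₂, h₃, h₄, h₅] at key
  refine mul_left_cancel₀ (pow_ne_zero (k + 2) (neg_ne_zero.mpr one_ne_zero)) ?_
  linear_combination key

theorem hankelDet_succ_mul_hankelDet_pred (l : ℤ) (k : ℕ) :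
    hankelDet s (l - 1) (k + 2) * hankelDet s (l + 2) k =
      hankelDet s (l + 1) (k + 1) * gammaDet s (l - 1) (k + 1) -
        hankelDet s l (k + 1) * gammaDet s l (k + 1) := by
  set A := of fun i j : Fin (k + 2) => s (l - 1 + i + j)
  have key := det_mul_det_updateCol_single_updateCol_single A
    (Fin.last_pos.ne : (0 : Fin (k + 2)) ≠ Fin.last _) 0 1
  have h₀ : A.det = hankelDet s (l - 1) (k + 2) := rfl
  have h₁ : ((A.updateCol 0 (Pi.single 0 1)).updateCol (Fin.last _) (Pi.single 1 1)).det =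
      (-1) ^ (k + 2) * hankelDet s (l + 2) k := by
    rw [det_updateCol_single_updateCol_single_eq_submatrix A 1 (Fin.last _) 0 0
      Fin.one_succAbove_zero (by simp),
      det_submatrix_hankel s _ _ _ 2 1 (by simp) (by simp)]
    simp only [Fin.val_zero, Fin.val_one, Fin.val_last]
    ring_nf
  have h₂ : (A.updateCol 0 (Pi.single 0 1)).det = hankelDet s (l + 1) (k + 1) := by
    rw [det_updateCol_single_eq_submatrix, det_submatrix_hankel s _ _ _ 1 1 (by simp) (by simp)]
    simp only [Fin.val_zero]
    ring_nf
  have h₃ : (A.updateCol (Fin.last _) (Pi.single 1 1)).det =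
      (-1) ^ (k + 2) * gammaDet s (l - 1) (k + 1) := by
    rw [det_updateCol_single_eq_submatrix,
      det_submatrix_gamma s _ _ _ 0 0 (by simp [Fin.val_one_succAbove]) (by simp)]
    simp only [Fin.val_one, Fin.val_last]
    ring_nf
  have h₄ : (A.updateCol (Fin.last _) (Pi.single 0 1)).det =
      (-1) ^ (k + 1) * hankelDet s l (k + 1) := by
    rw [det_updateCol_single_eq_submatrix, det_submatrix_hankel s _ _ _ 1 0 (by simp) (by simp)]
    simp only [Fin.val_zero, Fin.val_last]
    ring_nf
  have h₅ : (A.updateCol 0 (Pi.single 1 1)).det = -gammaDet s l (k + 1) := by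
    rw [det_updateCol_single_eq_submatrix,
      det_submatrix_gamma s _ _ _ 0 1 (by simp [Fin.val_one_succAbove]) (by simp)]
    simp only [Fin.val_zero, Fin.val_one]
    ring_nf
  rw [h₀, h₁, h₂, h₃, h₄, h₅] at key
  refine mul_left_cancel₀ (pow_ne_zero (k + 2) (neg_ne_zero.mpr one_ne_zero)) ?_
  linear_combination key

end Hankel

/-- The bilinear identities
`Δ_{l-1,k} Δ_{l+2,k-1} = Δ_{l+1,k-1} Γ_{l-1,k} - Δ_{l,k} Γ_{l,k-1}` and
`Δ_{l-1,k+1} Δ_{l+2,k-1} = Δ_{l+1,k} Γ_{l-1,k} - Δ_{l,k} Γ_{l,k}`. -/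
theorem stmt4 (s : ℤ → ℝ) (l : ℤ) (k : ℕ) (hk : 1 ≤ k) :
    (hankelDet s (l - 1) k * hankelDet s (l + 2) (k - 1) =
      hankelDet s (l + 1) (k - 1) * gammaDet s (l - 1) k -
        hankelDet s l k * gammaDet s l (k - 1)) ∧
    (hankelDet s (l - 1) (k + 1) * hankelDet s (l + 2) (k - 1) =
      hankelDet s (l + 1) k * gammaDet s (l - 1) k -
        hankelDet s l k * gammaDet s l k) := by
  obtain ⟨k, rfl⟩ : ∃ j, k = j + 1 := ⟨k - 1, by omega⟩
  refine ⟨?_, hankelDet_succ_mul_hankelDet_pred s l k⟩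
  -- `Γ_{l,0} = 0` is a convention rather than a `0 × 0` minor, so `k = 1` is checked by hand.
  rcases k with _ | k
  · simp [hankelDet, gammaDet]
  · exact hankelDet_mul_hankelDet_pred s l k
end

section
/- Let x_1 < x_2 < ⋯ be a strictly increasing real sequence and (υ_n) nonnegative reals. Then sup_{n} e^{x_n} ∑_{k ≥ n} υ_k e^{−x_k} < ∞ if and only if sup_{m ∈ ℤ} ∑_{k : x_k ∈ [m, m+1)} υ_k < ∞ (assuming x_n → ∞). -/
/-!
Every `k` with `x_k ∈ [m, m + 1)` lies in the tail starting at the first `n` with `x_n ≥ m`,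
and for such `k` we have `υ_k ≤ e^{m+1} υ_k e^{-x_k}`; hence the mass of the block is at most
`e^{m+1} e^{-x_n} C ≤ e C`. Conversely, split the tail from `n` along the blocks
`[⌊x_n⌋ + j, ⌊x_n⌋ + j + 1)`: the `j`-th part of the tail is at most `e^{-⌊x_n⌋ - j} C`, and summing
the geometric series bounds `e^{x_n}` times the tail by `e C / (1 - e^{-1})`.
-/

open Filter Real

def unitBlock (x : ℕ → ℝ) (m : ℤ) : Set ℕ := {k | (m : ℝ) ≤ x k ∧ x k < m + 1}

lemma mem_unitBlock_iff_floor_eq {x : ℕ → ℝ} {m : ℤ} {k : ℕ} :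
    k ∈ unitBlock x m ↔ ⌊x k⌋ = m :=
  Int.floor_eq_iff.symm

noncomputable def tailSum (x v : ℕ → ℝ) (n : ℕ) : ℝ :=
  ∑' k, if n ≤ k then v k * exp (-x k) else 0

noncomputable def blockSum (x v : ℕ → ℝ) (m : ℤ) : ℝ :=
  ∑' k, (unitBlock x m).indicator v k

section

variable {x v : ℕ → ℝ}

lemma le_exp_add_one_mul_of_mem_unitBlock (hv : ∀ k, 0 ≤ v k) {m : ℤ} {k : ℕ}
    (hk : k ∈ unitBlock x m) : v k ≤ exp (m + 1) * (v k * exp (-x k)) := by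
  calc v k = v k * exp (-x k) * exp (x k) := by rw [mul_assoc, ← exp_add]; simp
    _ ≤ v k * exp (-x k) * exp (m + 1) := by have := hv k; gcongr; exact hk.2.le
    _ = exp (m + 1) * (v k * exp (-x k)) := mul_comm _ _

lemma summable_indicator_unitBlock (hv : ∀ k, 0 ≤ v k)
    (hsum : Summable fun k => v k * exp (-x k)) (m : ℤ) :
    Summable ((unitBlock x m).indicator v) := by
  refine (hsum.mul_left (exp (m + 1))).of_nonneg_of_le
    (Set.indicator_nonneg fun k _ => hv k) fun k => ?_
  by_cases hk : k ∈ unitBlock x m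
  · rw [Set.indicator_of_mem hk]
    exact le_exp_add_one_mul_of_mem_unitBlock hv hk
  · rw [Set.indicator_of_notMem hk]
    exact mul_nonneg (exp_pos _).le (mul_nonneg (hv k) (exp_pos _).le)

lemma tail_term_nonneg (hv : ∀ k, 0 ≤ v k) (n k : ℕ) :
    0 ≤ if n ≤ k then v k * exp (-x k) else 0 := by
  have := hv k
  split_ifs <;> positivity

lemma summable_tail (hv : ∀ k, 0 ≤ v k) (hsum : Summable fun k => v k * exp (-x k)) (n : ℕ) :
    Summable fun k => if n ≤ k then v k * exp (-x k) else 0 := by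
  refine hsum.of_nonneg_of_le (tail_term_nonneg hv n) fun k => ?_
  split_ifs
  · exact le_rfl
  · have := hv k
    positivity

lemma tailSum_nonneg (hv : ∀ k, 0 ≤ v k) (n : ℕ) : 0 ≤ tailSum x v n :=
  tsum_nonneg (tail_term_nonneg hv n)

lemma blockSum_nonneg (hv : ∀ k, 0 ≤ v k) (m : ℤ) : 0 ≤ blockSum x v m :=
  tsum_nonneg (Set.indicator_nonneg fun k _ => hv k)

lemma blockSum_le_of_exp_mul_tailSum_le (hv : ∀ k, 0 ≤ v k)
    (hsum : Summable fun k => v k * exp (-x k)) {C : ℝ}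
    (hC : ∀ n, exp (x n) * tailSum x v n ≤ C) (m : ℤ) : blockSum x v m ≤ exp 1 * C := by
  have hC0 : 0 ≤ C := (mul_nonneg (exp_pos _).le (tailSum_nonneg hv 0)).trans (hC 0)
  by_cases hm : ∃ k, (m : ℝ) ≤ x k
  swap
  · simp only [not_exists, not_le] at hm
    have hempty : unitBlock x m = ∅ :=
      Set.eq_empty_of_forall_notMem fun k hk => (hm k).not_ge hk.1
    simp only [blockSum, hempty, Set.indicator_empty, tsum_zero]
    positivity
  set n := Nat.find hm
  have hpoint : ∀ k, (unitBlock x m).indicator v k ≤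
      exp (m + 1) * if n ≤ k then v k * exp (-x k) else 0 := by
    intro k
    by_cases hk : k ∈ unitBlock x m
    · rw [Set.indicator_of_mem hk, if_pos (Nat.find_min' hm hk.1)]
      exact le_exp_add_one_mul_of_mem_unitBlock hv hk
    · rw [Set.indicator_of_notMem hk]
      exact mul_nonneg (exp_pos _).le (tail_term_nonneg hv n k)
  have htail : tailSum x v n ≤ exp (-x n) * C :=
    calc tailSum x v n = exp (-x n) * (exp (x n) * tailSum x v n) := by
          rw [← mul_assoc, ← exp_add]; simp
      _ ≤ exp (-x n) * C := by gcongr; exact hC n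
  calc blockSum x v m
      ≤ ∑' k, exp (m + 1) * if n ≤ k then v k * exp (-x k) else 0 :=
        (summable_indicator_unitBlock hv hsum m).tsum_le_tsum hpoint
          ((summable_tail hv hsum n).mul_left _)
    _ = exp (m + 1) * tailSum x v n := tsum_mul_left
    _ ≤ exp (m + 1) * (exp (-m) * C) := by
        gcongr
        exact htail.trans (by gcongr; exact Nat.find_spec hm)
    _ = exp 1 * C := by rw [← mul_assoc, ← exp_add]; ring_nf

lemma exp_mul_tailSum_le_of_blockSum_le (hx : Monotone x) (hv : ∀ k, 0 ≤ v k)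
    (hsum : Summable fun k => v k * exp (-x k)) {C : ℝ} (hC : ∀ m, blockSum x v m ≤ C)
    (n : ℕ) : exp (x n) * tailSum x v n ≤ exp 1 * (C * (1 - exp (-1))⁻¹) := by
  set m₀ := ⌊x n⌋
  set g := fun k => if n ≤ k then v k * exp (-x k) else 0
  -- beyond `n`, the fibre of `φ` over `j` is the part of the block `[m₀ + j, m₀ + j + 1)`
  set φ : ℕ → ℕ := fun k => (⌊x k⌋ - m₀).toNat
  have hfiber (j : ℕ) : ∑' k : φ ⁻¹' {j}, g k ≤ exp (-m₀) * C * exp (-1) ^ j := by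
    have hpoint (k : φ ⁻¹' {j}) :
        g k ≤ exp (-(m₀ + j : ℤ)) * (unitBlock x (m₀ + j)).indicator v k := by
      obtain ⟨k, hk⟩ := k
      simp only [g]
      split_ifs with hnk
      · have hfloor : ⌊x k⌋ = m₀ + j := by
          have := Int.floor_mono (hx hnk)
          simp only [φ, Set.mem_preimage, Set.mem_singleton_iff] at hk
          omega
        rw [Set.indicator_of_mem (mem_unitBlock_iff_floor_eq.2 hfloor), mul_comm]
        have := hv k
        gcongr
        exact hfloor ▸ Int.floor_le (x k)
      · exact mul_nonneg (exp_pos _).le (Set.indicator_nonneg (fun k _ => hv k) k)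
    calc ∑' k : φ ⁻¹' {j}, g k
        ≤ ∑' k : φ ⁻¹' {j}, exp (-(m₀ + j : ℤ)) * (unitBlock x (m₀ + j)).indicator v k :=
          ((summable_tail hv hsum n).subtype _).tsum_le_tsum hpoint
            (((summable_indicator_unitBlock hv hsum _).mul_left _).subtype _)
      _ ≤ ∑' k, exp (-(m₀ + j : ℤ)) * (unitBlock x (m₀ + j)).indicator v k :=
          Summable.tsum_subtype_le _ _
            (fun k => mul_nonneg (exp_pos _).le (Set.indicator_nonneg (fun k _ => hv k) k))
            ((summable_indicator_unitBlock hv hsum _).mul_left _)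
      _ = exp (-(m₀ + j : ℤ)) * blockSum x v (m₀ + j) := tsum_mul_left
      _ ≤ exp (-(m₀ + j : ℤ)) * C := by gcongr; exact hC _
      _ = exp (-m₀) * C * exp (-1) ^ j := by
          rw [← exp_nat_mul, mul_right_comm, ← exp_add]
          push_cast
          ring_nf
  have hr : exp (-1) < 1 := exp_lt_one_iff.2 (by norm_num)
  have hgeom : HasSum (fun j : ℕ => exp (-m₀) * C * exp (-1) ^ j)
      (exp (-m₀) * C * (1 - exp (-1))⁻¹) :=
    (hasSum_geometric_of_lt_one (exp_pos _).le hr).mul_left _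
  have htail : tailSum x v n ≤ exp (-m₀) * C * (1 - exp (-1))⁻¹ :=
    hasSum_le hfiber ((summable_tail hv hsum n).hasSum.tsum_fiberwise φ) hgeom
  have hC₀ : 0 ≤ C * (1 - exp (-1))⁻¹ :=
    mul_nonneg ((blockSum_nonneg hv 0).trans (hC 0))
      (inv_nonneg.2 (sub_nonneg.2 hr.le))
  calc exp (x n) * tailSum x v n
      ≤ exp (x n) * (exp (-m₀) * C * (1 - exp (-1))⁻¹) := by gcongr
    _ = exp (x n - m₀) * (C * (1 - exp (-1))⁻¹) := by rw [exp_sub, exp_neg]; ring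
    _ ≤ exp 1 * (C * (1 - exp (-1))⁻¹) := by
        gcongr
        linarith [Int.lt_floor_add_one (x n)]

end

theorem stmt5_general (x : ℕ → ℝ) (hx : StrictMono x)
    (v : ℕ → ℝ) (hv : ∀ n, 0 ≤ v n)
    (hsum : Summable fun k => v k * Real.exp (-x k)) :
    (∃ C : ℝ, ∀ n : ℕ,
        Real.exp (x n) * (∑' k : ℕ, if n ≤ k then v k * Real.exp (-x k) else 0) ≤ C) ↔
    (∃ C : ℝ, ∀ m : ℤ,
        (∑' k : ℕ, Set.indicator {k : ℕ | (m : ℝ) ≤ x k ∧ x k < m + 1} v k) ≤ C) :=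
  ⟨fun ⟨C, hC⟩ => ⟨exp 1 * C, blockSum_le_of_exp_mul_tailSum_le hv hsum hC⟩,
    fun ⟨_, hC⟩ => ⟨_, exp_mul_tailSum_le_of_blockSum_le hx.monotone hv hsum hC⟩⟩

/-- Weighted discrete Hardy-type condition: for a strictly increasing sequence `x_n → ∞`
and nonnegative weights `υ_n` with summable `υ_k e^{-x_k}`, the condition
`sup_n e^{x_n} ∑_{k ≥ n} υ_k e^{-x_k} < ∞` holds iff
`sup_{m ∈ ℤ} ∑_{k : x_k ∈ [m, m+1)} υ_k < ∞`. -/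
theorem stmt5 (x : ℕ → ℝ) (hx : StrictMono x) (hxtop : Tendsto x atTop atTop)
    (v : ℕ → ℝ) (hv : ∀ n, 0 ≤ v n)
    (hsum : Summable fun k => v k * Real.exp (-x k)) :
    (∃ C : ℝ, ∀ n : ℕ,
        Real.exp (x n) * (∑' k : ℕ, if n ≤ k then v k * Real.exp (-x k) else 0) ≤ C) ↔
    (∃ C : ℝ, ∀ m : ℤ,
        (∑' k : ℕ, Set.indicator {k : ℕ | (m : ℝ) ≤ x k ∧ x k < m + 1} v k) ≤ C) :=
  stmt5_general x hx v hv hsum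
end

section
/- Let (x_n) be a strictly increasing sequence of reals tending to +∞ and (ω_n) positive reals such that there is C > 0 with ∑_{k ≥ n} ω_k e^{−x_k} ≤ C e^{−x_n} for all n, and such that the partial sums ∑_{x_n < x} ω_n grow at most linearly in x. Then the series u(x) = (1/2) ∑_{n=1}^∞ ω_n e^{−|x − x_n|} converges locally uniformly on ℝ, and satisfies the pointwise bound u(x) ≤ C' (1 + |x|)/2 for some constant C'. -/
open Filter

/-- Local uniform convergence of the infinite peakon series
`u(x) = (1/2) ∑_{n} ω_n e^{-|x - x_n|}` under a Hardy-type tail bound and a linear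
growth bound on the partial sums of the heights, together with the pointwise
linear growth bound `u(x) ≤ C' (1 + |x|)/2`. -/
theorem stmt6 (x : ℕ → ℝ) (hx : StrictMono x) (hxtop : Tendsto x atTop atTop)
    (ω : ℕ → ℝ) (hω : ∀ n, 0 < ω n)
    (hsum : Summable fun k => ω k * Real.exp (-x k))
    (C : ℝ) (hC : 0 < C)
    (htail : ∀ n : ℕ, (∑' k : ℕ, if n ≤ k then ω k * Real.exp (x n - x k) else 0) ≤ C)
    (C₁ : ℝ) (hC₁ : 0 < C₁)
    (hpart : ∀ X : ℝ, (∑' n : ℕ, Set.indicator {n : ℕ | x n < X} ω n) ≤ C₁ * (1 + |X|)) :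
    ∃ u : ℝ → ℝ,
      TendstoLocallyUniformly
        (fun N : ℕ => fun X : ℝ =>
          ∑ n ∈ Finset.range N, (1 / 2) * ω n * Real.exp (-|X - x n|)) u atTop ∧
      ∃ C' : ℝ, ∀ X : ℝ, u X ≤ C' * (1 + |X|) / 2 := by
  classical
  -- the candidate limit
  set u : ℝ → ℝ := fun X => ∑' n, (1 / 2) * ω n * Real.exp (-|X - x n|) with hu_def
  have hnonneg : ∀ (X : ℝ) (n : ℕ), 0 ≤ (1 / 2) * ω n * Real.exp (-|X - x n|) := by
    intro X n
    have := (hω n).le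
    positivity
  have hbound : ∀ (R X : ℝ), X ≤ R → ∀ n : ℕ,
      ‖(1 / 2) * ω n * Real.exp (-|X - x n|)‖
        ≤ (1 / 2) * Real.exp R * (ω n * Real.exp (-x n)) := by
    intro R X hXR n
    rw [Real.norm_of_nonneg (hnonneg X n)]
    have h2 : -|X - x n| ≤ R + -x n := by
      have := neg_abs_le (X - x n)
      linarith
    have h3 : Real.exp (-|X - x n|) ≤ Real.exp R * Real.exp (-x n) := by
      rw [← Real.exp_add]
      exact Real.exp_le_exp.mpr h2
    have := (hω n).le
    nlinarith [Real.exp_pos (-|X - x n|)]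
  have hsumR : ∀ R : ℝ, Summable (fun n => (1 / 2) * Real.exp R * (ω n * Real.exp (-x n))) :=
    fun R => hsum.mul_left _
  have hsummX : ∀ X : ℝ, Summable (fun n => (1 / 2) * ω n * Real.exp (-|X - x n|)) := by
    intro X
    refine (hsumR X).of_nonneg_of_le (hnonneg X) (fun n => ?_)
    have := hbound X X le_rfl n
    rwa [Real.norm_of_nonneg (hnonneg X n)] at this
  refine ⟨u, ?_, ?_⟩
  · -- local uniform convergence
    rw [tendstoLocallyUniformly_iff_forall_isCompact]
    intro K hK
    obtain ⟨R, hR⟩ := hK.isBounded.subset_closedBall 0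
    exact tendstoUniformlyOn_tsum_nat (hsumR R)
      (fun n X hX => hbound R X (le_trans (le_abs_self X)
        (by simpa [Real.norm_eq_abs] using Metric.mem_closedBall.mp (hR hX))) n)
  · -- linear growth bound
    refine ⟨C₁ + C, fun X => ?_⟩
    obtain ⟨N, hN⟩ := (hxtop.eventually_ge_atTop X).exists
    have hex : ∃ n, X ≤ x n := ⟨N, hN⟩
    set n₀ := Nat.find hex with hn₀
    have hXn₀ : X ≤ x n₀ := Nat.find_spec hex
    have hmin : ∀ k, x n₀ ≤ x k → n₀ ≤ k := by
      intro k hk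
      by_contra hlt
      push_neg at hlt
      exact absurd (le_trans hXn₀ hk) (Nat.find_min hex hlt)
    have hge : ∀ k, X ≤ x k → n₀ ≤ k := by
      intro k hk
      by_contra hlt
      push_neg at hlt
      exact absurd hk (Nat.find_min hex hlt)
    -- summability of the two majorant pieces
    have hind : Summable (fun n => Set.indicator {n : ℕ | x n < X} ω n) := by
      apply summable_of_ne_finset_zero (s := Finset.range n₀)
      intro n hn
      simp only [Finset.mem_range, not_lt] at hn
      have : n ∉ {n : ℕ | x n < X} := not_lt.mpr (le_trans hXn₀ (hx.monotone hn))
      exact Set.indicator_of_notMem this ω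
    have htailsum : Summable (fun k => if n₀ ≤ k then ω k * Real.exp (x n₀ - x k) else 0) := by
      refine (hsum.mul_left (Real.exp (x n₀))).of_nonneg_of_le (fun k => ?_) (fun k => ?_)
      · split
        · exact mul_nonneg (hω k).le (Real.exp_pos _).le
        · exact le_rfl
      · split
        · apply le_of_eq
          rw [sub_eq_add_neg, Real.exp_add]; ring
        · exact mul_nonneg (Real.exp_pos _).le (mul_nonneg (hω k).le (Real.exp_pos _).le)
    have hterm : ∀ n, (1 / 2) * ω n * Real.exp (-|X - x n|)
        ≤ (1 / 2) * (Set.indicator {n : ℕ | x n < X} ω n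
            + (if n₀ ≤ n then ω n * Real.exp (x n₀ - x n) else 0)) := by
      intro n
      rcases lt_or_ge (x n) X with h | h
      · have he : Real.exp (-|X - x n|) ≤ 1 := by
          rw [Real.exp_le_one_iff]
          simp only [neg_nonpos]; exact abs_nonneg (X - x n)
        have hi : Set.indicator {n : ℕ | x n < X} ω n = ω n := Set.indicator_of_mem (show n ∈ {n : ℕ | x n < X} from h) ω
        have h0 : 0 ≤ (if n₀ ≤ n then ω n * Real.exp (x n₀ - x n) else 0) := by
          split
          · exact mul_nonneg (hω n).le (Real.exp_pos _).le
          · exact le_rfl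
        rw [hi]
        nlinarith [(hω n).le, (Real.exp_pos (-|X - x n|)).le]
      · have hn : n₀ ≤ n := hge n h
        rw [if_pos hn]
        have habs : -|X - x n| = X - x n := by
          rw [abs_of_nonpos (by linarith : X - x n ≤ 0)]; ring
        have he : Real.exp (-|X - x n|) ≤ Real.exp (x n₀ - x n) := by
          rw [habs]
          exact Real.exp_le_exp.mpr (by linarith)
        have h0 : 0 ≤ Set.indicator {n : ℕ | x n < X} ω n :=
          Set.indicator_nonneg (fun k _ => (hω k).le) n
        nlinarith [(hω n).le, (Real.exp_pos (x n₀ - x n)).le]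
    have hmaj : Summable (fun n => (1 / 2 : ℝ) * (Set.indicator {n : ℕ | x n < X} ω n
        + (if n₀ ≤ n then ω n * Real.exp (x n₀ - x n) else 0))) :=
      (hind.add htailsum).mul_left _
    have huX : u X ≤ ∑' n, (1 / 2 : ℝ) * (Set.indicator {n : ℕ | x n < X} ω n
        + (if n₀ ≤ n then ω n * Real.exp (x n₀ - x n) else 0)) :=
      Summable.tsum_le_tsum hterm (hsummX X) hmaj
    rw [tsum_mul_left, Summable.tsum_add hind htailsum] at huX
    have h1 := hpart X
    have h2 := htail n₀
    have h3 : (0:ℝ) ≤ |X| := abs_nonneg X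
    nlinarith
end

section
/- Let σ = {λ_n : n ∈ ℕ} be a strictly increasing unbounded sequence of positive reals and γ_n > 0 with ∑ γ_n λ_n^k e^{−t/(2λ_n)} < ∞ for all k, t. Define Δ_{l,k}(t) = ∑_{J ⊂ ℕ, |J| = k} (∏_{j∈J} γ_j λ_j^l) (∏_{i<j∈J}(λ_i−λ_j)²) exp(−(t/2) ∑_{j∈J} 1/λ_j). Then as t → −∞, Δ_{l,k}(t) ∼ (∏_{j=1}^k γ_j λ_j^l)(∏_{1≤i<j≤k}(λ_i−λ_j)²) exp(−(t/2) ∑_{j=1}^k 1/λ_j), i.e. the term indexed by J = {1,…,k} dominates. -/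
open Filter Finset Topology

/-!
Divide every term by the one indexed by `J₀ = {0, …, k-1}`. The ratio for `J` is a constant
times `exp (-(t/2) (w J - w J₀))` with `w J = ∑_{j ∈ J} 1/λ_j`, and since `1/λ` is strictly
decreasing, `w` is maximised exactly at `J₀`. Hence every ratio but the one for `J₀` tends to `0`
as `t → -∞`, and for `t ≤ 0` each ratio is bounded by its value at `t = 0`, which is summable:
dominated convergence for series concludes.
-/

theorem Finset.sum_lt_sum_range_of_strictAnti {M : Type*} [AddCommMonoid M] [PartialOrder M]
    [IsOrderedCancelAddMonoid M] {f : ℕ → M} (hf : StrictAnti f) {k : ℕ} {J : Finset ℕ}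
    (hJ : #J = k) (hne : J ≠ range k) :
    ∑ j ∈ J, f j < ∑ j ∈ range k, f j := by
  classical
  have hcard : #(J \ range k) = #(range k \ J) := card_sdiff_comm (by rw [hJ, card_range])
  have hnonempty : (range k \ J).Nonempty := by
    rw [nonempty_iff_ne_empty, Ne, sdiff_eq_empty_iff_subset]
    exact fun h => hne (eq_of_subset_of_card_le h (by rw [hJ, card_range])).symm
  have hsdiff : ∑ j ∈ J \ range k, f j < ∑ i ∈ range k \ J, f i :=
    calc ∑ j ∈ J \ range k, f j ≤ #(J \ range k) • f k :=
          sum_le_card_nsmul _ _ _ fun j hj => hf.antitone (by simpa using (mem_sdiff.1 hj).2)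
      _ = ∑ _i ∈ range k \ J, f k := by rw [hcard, sum_const]
      _ < ∑ i ∈ range k \ J, f i :=
          sum_lt_sum_of_nonempty hnonempty fun i hi => hf (by simpa using (mem_sdiff.1 hi).1)
  rw [← sum_inter_add_sum_sdiff J (range k), ← sum_inter_add_sum_sdiff (range k) J, inter_comm]
  gcongr

theorem tendsto_tsum_div_dominant_exp_term {ι : Type*} (a w : ι → ℝ) (i₀ : ι) (ha : a i₀ ≠ 0)
    (hw : ∀ i ≠ i₀, w i < w i₀) (s₀ : ℝ) (hsum : Summable fun i => a i * Real.exp (s₀ * w i)) :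
    Tendsto (fun s => (∑' i, a i * Real.exp (s * w i)) / (a i₀ * Real.exp (s * w i₀)))
      atTop (𝓝 1) := by
  classical
  have hratio : ∀ s i, a i * Real.exp (s * w i) / (a i₀ * Real.exp (s * w i₀)) =
      a i / a i₀ * Real.exp (s * (w i - w i₀)) := by
    intro s i
    rw [mul_div_mul_comm, ← Real.exp_sub, mul_sub]
  have hle : ∀ i, w i - w i₀ ≤ 0 := by
    intro i
    rcases eq_or_ne i i₀ with rfl | hi
    · rw [sub_self]
    · exact (sub_neg.2 (hw i hi)).le
  simp_rw [← tsum_div_const]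
  rw [← tsum_ite_eq i₀ fun _ => (1 : ℝ)]
  refine tendsto_tsum_of_dominated_convergence
    (hsum.div_const (a i₀ * Real.exp (s₀ * w i₀))).norm (fun i => ?_) ?_
  · rcases eq_or_ne i i₀ with rfl | hi
    · simp [div_self, ha]
    · simp only [hratio, if_neg hi]
      have hexp : Tendsto (fun s => Real.exp (s * (w i - w i₀))) atTop (𝓝 0) :=
        Real.tendsto_exp_atBot.comp (tendsto_id.atTop_mul_const_of_neg (sub_neg.2 (hw i hi)))
      simpa using hexp.const_mul (a i / a i₀)
  · filter_upwards [eventually_ge_atTop s₀] with s hs i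
    rw [hratio, hratio, norm_mul, norm_mul, Real.norm_of_nonneg (Real.exp_pos _).le,
      Real.norm_of_nonneg (Real.exp_pos _).le]
    exact mul_le_mul_of_nonneg_left
      (Real.exp_le_exp.2 (mul_le_mul_of_nonpos_right hs (hle i))) (norm_nonneg _)

theorem stmt7_general (lam γ : ℕ → ℝ) (hpos : ∀ n, 0 < lam n) (hmono : StrictMono lam)
    (hγ : ∀ n, 0 < γ n) (l : ℤ) (k : ℕ)
    (term : Finset ℕ → ℝ → ℝ)
    (hterm : ∀ (J : Finset ℕ) (t : ℝ), term J t =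
      (∏ j ∈ J, γ j * lam j ^ l) *
        (∏ p ∈ (J ×ˢ J).filter (fun p => p.1 < p.2), (lam p.1 - lam p.2) ^ 2) *
        Real.exp (-(t / 2) * ∑ j ∈ J, 1 / lam j))
    (hsum : ∀ t : ℝ, Summable fun J : {J : Finset ℕ // J.card = k} => term J.1 t) :
    Tendsto
      (fun t : ℝ =>
        (∑' J : {J : Finset ℕ // J.card = k}, term J.1 t) / term (Finset.range k) t)
      atBot (nhds 1) := by
  let a (J : {J : Finset ℕ // #J = k}) : ℝ := (∏ j ∈ J.1, γ j * lam j ^ l) *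
    ∏ p ∈ (J.1 ×ˢ J.1).filter (fun p => p.1 < p.2), (lam p.1 - lam p.2) ^ 2
  let w (J : {J : Finset ℕ // #J = k}) : ℝ := ∑ j ∈ J.1, 1 / lam j
  let J₀ : {J : Finset ℕ // #J = k} := ⟨range k, card_range k⟩
  have ha : a J₀ ≠ 0 := mul_ne_zero
    (prod_ne_zero_iff.2 fun j _ => (mul_pos (hγ j) (zpow_pos (hpos j) l)).ne')
    (prod_ne_zero_iff.2 fun p hp =>
      pow_ne_zero 2 (sub_ne_zero.2 (hmono.injective.ne (mem_filter.1 hp).2.ne)))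
  have hw : ∀ J ≠ J₀, w J < w J₀ := fun J hJ =>
    sum_lt_sum_range_of_strictAnti (fun m n h => one_div_lt_one_div_of_lt (hpos m) (hmono h))
      J.2 (fun h => hJ (Subtype.ext h))
  have hdom := tendsto_tsum_div_dominant_exp_term a w J₀ ha hw 0 (by simpa [hterm] using hsum 0)
  have hs : Tendsto (fun t : ℝ => -(t / 2)) atBot atTop :=
    tendsto_neg_atBot_atTop.comp (tendsto_id.atBot_div_const two_pos)
  refine (hdom.comp hs).congr fun t => ?_
  simp only [Function.comp_apply, hterm]
  rfl

/-- For a discrete spectral measure with positive masses `γ_n` at strictly increasing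
positive points `λ_n → ∞`, the Hankel-type sum
`Δ_{l,k}(t) = ∑_{|J| = k} (∏_{j∈J} γ_j λ_j^l)(∏_{i<j∈J}(λ_i-λ_j)²) e^{-(t/2)∑_{j∈J} 1/λ_j}`
is, as `t → -∞`, asymptotically equal to the single term indexed by the set of the `k`
smallest indices `J = {0, …, k-1}` (i.e. the ratio tends to `1`). -/
theorem stmt7 (lam γ : ℕ → ℝ) (hpos : ∀ n, 0 < lam n) (hmono : StrictMono lam)
    (htop : Tendsto lam atTop atTop) (hγ : ∀ n, 0 < γ n) (l : ℤ) (k : ℕ)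
    (term : Finset ℕ → ℝ → ℝ)
    (hterm : ∀ (J : Finset ℕ) (t : ℝ), term J t =
      (∏ j ∈ J, γ j * lam j ^ l) *
        (∏ p ∈ (J ×ˢ J).filter (fun p => p.1 < p.2), (lam p.1 - lam p.2) ^ 2) *
        Real.exp (-(t / 2) * ∑ j ∈ J, 1 / lam j))
    (hsum : ∀ t : ℝ, Summable fun J : {J : Finset ℕ // J.card = k} => term J.1 t) :
    Tendsto
      (fun t : ℝ =>
        (∑' J : {J : Finset ℕ // J.card = k}, term J.1 t) / term (Finset.range k) t)
      atBot (nhds 1) :=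
  stmt7_general lam γ hpos hmono hγ l k term hterm hsum
end

section
/- Under the setup of a discrete spectral measure ρ_0 = ∑ γ_n δ_{λ_n} with 0 < λ_1 < λ_2 < ⋯ → ∞, the first peakon position x_1(t) = −log(∑_n γ_n e^{−t/(2λ_n)}) satisfies: x_1(t) → ∞ as t → ∞, and x_1(t) = t/(2λ_1) − log γ_1 + o(1) as t → −∞. -/
open Filter

/-- For a discrete spectral measure `ρ₀ = ∑ γ_n δ_{λ_n}` with positive summable weights
and `0 < λ_0 < λ_1 < ⋯ → ∞`, the first peakon position
`x₁(t) = -log (∑_n γ_n e^{-t/(2λ_n)})` satisfies `x₁(t) → ∞` as `t → ∞` and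
`x₁(t) = t/(2λ_0) - log γ_0 + o(1)` as `t → -∞`. -/
theorem stmt8 (lam γ : ℕ → ℝ) (hpos : ∀ n, 0 < lam n) (hmono : StrictMono lam)
    (htop : Tendsto lam atTop atTop) (hγ : ∀ n, 0 < γ n) (hγsum : Summable γ)
    (hsum : ∀ t : ℝ, Summable fun n => γ n * Real.exp (-t / (2 * lam n))) :
    Tendsto (fun t : ℝ => -Real.log (∑' n : ℕ, γ n * Real.exp (-t / (2 * lam n))))
      atTop atTop ∧
    Tendsto (fun t : ℝ =>
        (-Real.log (∑' n : ℕ, γ n * Real.exp (-t / (2 * lam n)))) -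
          (t / (2 * lam 0) - Real.log (γ 0)))
      atBot (nhds 0) := by
  set S : ℝ → ℝ := fun t => ∑' n : ℕ, γ n * Real.exp (-t / (2 * lam n)) with hS
  have hSpos : ∀ t, 0 < S t := by
    intro t
    have h0 : 0 < γ 0 * Real.exp (-t / (2 * lam 0)) :=
      mul_pos (hγ 0) (Real.exp_pos _)
    exact lt_of_lt_of_le h0 (Summable.le_tsum (hsum t) 0 fun n _ =>
      le_of_lt (mul_pos (hγ n) (Real.exp_pos _)))
  constructor
  · -- part 1: S t → 0, hence -log S → ∞
    have hS0 : Tendsto S atTop (nhds 0) := by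
      have key : Tendsto (fun t : ℝ => ∑' n, γ n * Real.exp (-t / (2 * lam n)))
          atTop (nhds (∑' _ : ℕ, (0:ℝ))) := by
        apply tendsto_tsum_of_dominated_convergence hγsum
        · intro n
          have h1 : Tendsto (fun t : ℝ => -t / (2 * lam n)) atTop atBot := by
            apply Tendsto.atBot_div_const (by have := hpos n; linarith)
            exact tendsto_neg_atTop_atBot
          have := (Real.tendsto_exp_atBot.comp h1).const_mul (γ n)
          simpa using this
        · filter_upwards [eventually_ge_atTop (0:ℝ)] with t ht n
          rw [Real.norm_eq_abs, abs_of_pos (mul_pos (hγ n) (Real.exp_pos _))]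
          have he : Real.exp (-t / (2 * lam n)) ≤ 1 := by
            rw [Real.exp_le_one_iff]
            have : 0 < 2 * lam n := by have := hpos n; linarith
            exact div_nonpos_of_nonpos_of_nonneg (by linarith) this.le
          exact mul_le_of_le_one_right (hγ n).le he
      simpa using key
    have hlog : Tendsto (fun t => Real.log (S t)) atTop atBot := by
      refine Real.tendsto_log_nhdsGT_zero.comp ?_
      rw [tendsto_nhdsWithin_iff]
      exact ⟨hS0, Eventually.of_forall fun t => hSpos t⟩
    exact tendsto_neg_atBot_atTop.comp hlog
  · -- part 2
    set T : ℝ → ℝ := fun t =>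
      ∑' n : ℕ, (γ n / γ 0) * Real.exp (t / (2 * lam 0) - t / (2 * lam n)) with hT
    have hTsum : ∀ t, Summable (fun n =>
        (γ n / γ 0) * Real.exp (t / (2 * lam 0) - t / (2 * lam n))) := by
      intro t
      have := (hsum t).mul_left (Real.exp (t / (2 * lam 0)) / γ 0)
      refine this.congr fun n => ?_
      have ha : t / (2 * lam 0) - t / (2 * lam n)
          = t / (2 * lam 0) + -t / (2 * lam n) := by ring
      rw [ha, Real.exp_add]
      field_simp
    have hSfact : ∀ t, S t = γ 0 * Real.exp (-t / (2 * lam 0)) * T t := by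
      intro t
      rw [hT, ← tsum_mul_left]
      refine tsum_congr fun n => ?_
      have ha : t / (2 * lam 0) - t / (2 * lam n)
          = -(-t / (2 * lam 0)) + -t / (2 * lam n) := by ring
      rw [ha, Real.exp_add, Real.exp_neg]
      have h0 : γ 0 ≠ 0 := (hγ 0).ne'
      have h1 : Real.exp (-t / (2 * lam 0)) ≠ 0 := (Real.exp_pos _).ne'
      field_simp
    have hTpos : ∀ t, 0 < T t := by
      intro t
      refine lt_of_lt_of_le (mul_pos (div_pos (hγ 0) (hγ 0)) (Real.exp_pos _))
        (Summable.le_tsum (hTsum t) 0 fun n _ =>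
          le_of_lt (mul_pos (div_pos (hγ n) (hγ 0)) (Real.exp_pos _)))
    have hT1 : Tendsto T atBot (nhds 1) := by
      have key : Tendsto T atBot
          (nhds (∑' n : ℕ, if n = 0 then (1:ℝ) else 0)) := by
        apply tendsto_tsum_of_dominated_convergence (bound := fun n => γ n / γ 0)
          (hγsum.div_const (γ 0))
        · intro n
          rcases eq_or_ne n 0 with rfl | hn
          · simp [div_self (hγ 0).ne']
          · simp only [if_neg hn]
            have hln : lam 0 < lam n := hmono (Nat.pos_of_ne_zero hn)
            have hc : 0 < 1 / (2 * lam 0) - 1 / (2 * lam n) := by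
              have h0 := hpos 0; have h1 := hpos n
              rw [sub_pos]
              apply one_div_lt_one_div_of_lt (by linarith) (by linarith)
            have harg : Tendsto (fun t : ℝ => t / (2 * lam 0) - t / (2 * lam n))
                atBot atBot := by
              have : (fun t : ℝ => t / (2 * lam 0) - t / (2 * lam n))
                  = fun t => t * (1 / (2 * lam 0) - 1 / (2 * lam n)) := by
                funext t; ring
              rw [this]
              exact Tendsto.atBot_mul_const hc tendsto_id
            have := (Real.tendsto_exp_atBot.comp harg).const_mul (γ n / γ 0)
            simpa using this
        · filter_upwards [eventually_le_atBot (0:ℝ)] with t ht n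
          rw [Real.norm_eq_abs,
            abs_of_pos (mul_pos (div_pos (hγ n) (hγ 0)) (Real.exp_pos _))]
          have he : Real.exp (t / (2 * lam 0) - t / (2 * lam n)) ≤ 1 := by
            rw [Real.exp_le_one_iff, sub_nonpos]
            rcases eq_or_ne n 0 with rfl | hn
            · exact le_refl _
            · have hln : lam 0 < lam n := hmono (Nat.pos_of_ne_zero hn)
              have h0 := hpos 0
              have hinv : (2 * lam n)⁻¹ ≤ (2 * lam 0)⁻¹ := by
                apply inv_anti₀ (by linarith) (by linarith)
              rw [div_eq_mul_inv, div_eq_mul_inv]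
              exact mul_le_mul_of_nonpos_left hinv ht
          exact mul_le_of_le_one_right (div_pos (hγ n) (hγ 0)).le he
      simpa using key
    have heq : ∀ t, (-Real.log (S t)) - (t / (2 * lam 0) - Real.log (γ 0))
        = -Real.log (T t) := by
      intro t
      rw [hSfact t, Real.log_mul (mul_pos (hγ 0) (Real.exp_pos _)).ne' (hTpos t).ne',
        Real.log_mul (hγ 0).ne' (Real.exp_pos _).ne', Real.log_exp]
      ring
    have : Tendsto (fun t => -Real.log (T t)) atBot (nhds 0) := by
      have hcont : Tendsto (fun t => Real.log (T t)) atBot (nhds (Real.log 1)) :=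
        (Real.continuousAt_log one_ne_zero).tendsto.comp hT1
      rw [Real.log_one] at hcont
      simpa using hcont.neg
    exact this.congr fun t => (heq t).symm
end

section
/- For n ∈ ℕ, the multiple integral over the positive orthant of the squared Vandermonde against the Laguerre weight evaluates as ∫_{(0,∞)^n} (∏_i λ_i^γ) ∏_{i<j} (λ_i − λ_j)² e^{−∑_i λ_i} dλ = ∏_{j=1}^n j! · Γ(γ + j), for γ > −1. -/
/-!
With `w(t) = t^γ e^{-t}`, the integrand is `det [w(λ_k) λ_k^i] · det [λ_k^i]`. Andréief's
identity (expand both determinants over permutations and integrate each product by Fubini) turns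
the integral into `n!` times the Hankel determinant of the moments
`∫ w(t) t^(i+j) dt = Γ(γ+1+i+j)`.
For any `F` with `F (x + 1) = x F x`, subtracting `a + i` times row `i` from row `i + 1` of
`[F (a+i+j)]` clears the first column below `F a` and leaves the minor `[(j+1) F (a+1+i+j)]`, so
`D_{n+1}(a) = F(a) n! D_n(a+1)` and hence `D_n(a) = ∏_{k<n} k! F(a+k)`.
-/

open Finset Matrix Nat MeasureTheory Equiv Set Real

theorem det_hankel_eq_prod_factorial_mul {R : Type*} [CommRing R] (F : R → R) (a : R)
    (hF : ∀ m : ℕ, F (a + (m + 1 : ℕ)) = (a + m) * F (a + m)) (n : ℕ) :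
    det (of fun i j : Fin n => F (a + (i + j : ℕ)))
      = ∏ k ∈ range n, (k ! : R) * F (a + k) := by
  induction n generalizing a with
  | zero => simp
  | succ n ih =>
    set B : Matrix (Fin (n + 1)) (Fin (n + 1)) R :=
      of fun i j => Fin.cases (F (a + j)) (fun i => (j : R) * F (a + (i + j : ℕ))) i
    have hrows : det (of fun i j : Fin (n + 1) => F (a + (i + j : ℕ))) = det B := by
      refine det_eq_of_forall_row_eq_smul_add_pred (fun i => a + i) (fun j => by simp [B])
        fun i j => ?_
      have := hF (i + j)
      simp only [of_apply, Fin.val_succ, Fin.val_castSucc, Fin.cases_succ, B] at this ⊢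
      rw [show i.val + 1 + j.val = i.val + j.val + 1 by omega, this]
      push_cast
      ring
    have hshift : ∀ m : ℕ, F (a + 1 + (m + 1 : ℕ)) = (a + 1 + m) * F (a + 1 + m) := by
      intro m
      have := hF (m + 1)
      push_cast at this ⊢
      rw [show a + 1 + (m + 1) = a + (m + 1 + 1) by ring, this]
      ring_nf
    have hminor : det (B.submatrix Fin.succ Fin.succ)
        = (∏ j : Fin n, ((j : R) + 1)) *
            det (of fun i j : Fin n => F (a + 1 + (i + j : ℕ))) := by
      rw [← det_mul_row]
      congr 1
      ext i j
      simp only [B, submatrix_apply, of_apply, Fin.cases_succ, Fin.val_succ]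
      push_cast
      ring_nf
    have hcorner : B 0 0 = F a := by simp [B]
    rw [hrows, det_succ_column_zero, Fin.sum_univ_succ, sum_eq_zero fun i _ => by simp [B],
      Fin.succAbove_zero, hminor, ih (a + 1) hshift, hcorner,
      prod_range_succ' (fun k => (k ! : R) * F (a + k)),
      Fin.prod_univ_eq_prod_range (fun j => (j : R) + 1)]
    simp only [factorial_succ, Nat.cast_mul, cast_succ, prod_mul_distrib, Fin.val_zero, pow_zero,
      Nat.cast_zero, factorial_zero, add_zero, add_assoc, add_comm (1 : R)]
    ring

theorem sum_sign_mul_sign_mul_prod_eq_factorial_mul_det {ι R : Type*} [Fintype ι]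
    [DecidableEq ι] [CommRing R] (M : Matrix ι ι R) :
    ∑ σ : Perm ι, ∑ τ : Perm ι, (Perm.sign σ * Perm.sign τ : R) * ∏ k, M (σ k) (τ k)
      = (Fintype.card ι)! * det M := by
  have hrow : ∀ σ : Perm ι, ∑ τ : Perm ι, (Perm.sign τ : R) * ∏ k, M (σ k) (τ k)
      = Perm.sign σ * det M := fun σ => by
    rw [← det_permute, ← det_transpose, det_apply']
    rfl
  calc _ = ∑ σ : Perm ι, (Perm.sign σ : R) * (Perm.sign σ * det M) := by
        simp only [← hrow, mul_sum, mul_assoc]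
    _ = _ := by
        simp only [← mul_assoc, ← Int.cast_mul, ← Units.val_mul, Int.units_mul_self,
          Units.val_one, Int.cast_one, one_mul, sum_const, Finset.card_univ, Fintype.card_perm,
          nsmul_eq_mul]

/-- Andréief's identity. -/
theorem integral_det_mul_det {ι α 𝕜 : Type*} [Fintype ι] [DecidableEq ι] [RCLike 𝕜]
    [MeasurableSpace α] (μ : Measure α) [SigmaFinite μ] (f g : ι → α → 𝕜)
    (hfg : ∀ i j, Integrable (fun t => f i t * g j t) μ) :
    ∫ x : ι → α, det (of fun i k => f i (x k)) * det (of fun i k => g i (x k))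
        ∂(Measure.pi fun _ => μ)
      = ((Fintype.card ι)! : 𝕜) * det (of fun i j => ∫ t, f i t * g j t ∂μ) := by
  have hexpand : ∀ x : ι → α,
      det (of fun i k => f i (x k)) * det (of fun i k => g i (x k))
        = ∑ σ : Perm ι, ∑ τ : Perm ι,
            (Perm.sign σ * Perm.sign τ : 𝕜) * ∏ k, f (σ k) (x k) * g (τ k) (x k) := by
    intro x
    simp only [det_apply', sum_mul_sum, prod_mul_distrib, of_apply]
    exact sum_congr rfl fun σ _ => sum_congr rfl fun τ _ => by ring
  have hterm : ∀ σ τ : Perm ι, Integrable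
      (fun x : ι → α => ∏ k, f (σ k) (x k) * g (τ k) (x k)) (Measure.pi fun _ => μ) :=
    fun σ τ => Integrable.fintype_prod fun k => hfg (σ k) (τ k)
  simp_rw [hexpand]
  rw [integral_finsetSum _ fun σ _ =>
      integrable_finsetSum _ fun τ _ => (hterm σ τ).const_mul _,
    ← sum_sign_mul_sign_mul_prod_eq_factorial_mul_det]
  refine sum_congr rfl fun σ _ => ?_
  rw [integral_finsetSum _ fun τ _ => (hterm σ τ).const_mul _]
  refine sum_congr rfl fun τ _ => ?_
  rw [integral_const_mul, integral_fintype_prod_eq_prod (fun k t => f (σ k) t * g (τ k) t)]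
  rfl

theorem det_vandermonde_sq {R : Type*} [CommRing R] {n : ℕ} (v : Fin n → R) :
    det (vandermonde v) ^ 2
      = ∏ p ∈ univ.filter (fun p : Fin n × Fin n => p.1 < p.2), (v p.1 - v p.2) ^ 2 := by
  rw [det_vandermonde, ← Finset.prod_pow, prod_filter, Fintype.prod_prod_type]
  refine prod_congr rfl fun i _ => ?_
  rw [← Finset.prod_pow, ← filter_lt_eq_Ioi, prod_filter]
  exact prod_congr rfl fun j _ => by split_ifs <;> ring

theorem eqOn_rpow_mul_exp_neg_mul_pow (γ : ℝ) (m : ℕ) :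
    EqOn (fun t => t ^ γ * exp (-t) * t ^ m) (fun t => exp (-t) * t ^ (γ + m + 1 - 1))
      (Ioi 0) := fun t (ht : 0 < t) => by
  simp only [add_sub_cancel_right, rpow_add ht, rpow_natCast]
  ring

theorem integrableOn_rpow_mul_exp_neg_mul_pow {γ : ℝ} (hγ : -1 < γ) (m : ℕ) :
    IntegrableOn (fun t => t ^ γ * exp (-t) * t ^ m) (Ioi 0) :=
  (GammaIntegral_convergent (by linarith [m.cast_nonneg (α := ℝ)])).congr_fun
    (eqOn_rpow_mul_exp_neg_mul_pow γ m).symm measurableSet_Ioi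

theorem integral_rpow_mul_exp_neg_mul_pow {γ : ℝ} (hγ : -1 < γ) (m : ℕ) :
    ∫ t in Ioi 0, t ^ γ * exp (-t) * t ^ m = Gamma (γ + m + 1) := by
  rw [setIntegral_congr_fun measurableSet_Ioi (eqOn_rpow_mul_exp_neg_mul_pow γ m),
    Gamma_eq_integral (by linarith [m.cast_nonneg (α := ℝ)])]

theorem laguerre_integrand_eq_det_mul_det (γ : ℝ) {n : ℕ} (lam : Fin n → ℝ) :
    (∏ i, lam i ^ γ) *
        (∏ p ∈ univ.filter (fun p : Fin n × Fin n => p.1 < p.2), (lam p.1 - lam p.2) ^ 2) *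
        exp (-(∑ i, lam i))
      = det (of fun i k : Fin n => lam k ^ γ * exp (-lam k) * lam k ^ (i : ℕ))
          * det (of fun i k : Fin n => lam k ^ (i : ℕ)) := by
  have hweighted : det (of fun i k : Fin n => lam k ^ γ * exp (-lam k) * lam k ^ (i : ℕ))
      = (∏ k, lam k ^ γ * exp (-lam k)) * det (vandermonde lam)ᵀ := by
    rw [← det_mul_row]
    rfl
  have hvandermonde : of (fun i k : Fin n => lam k ^ (i : ℕ)) = (vandermonde lam)ᵀ := rfl
  rw [← det_vandermonde_sq, hweighted, hvandermonde, det_transpose, prod_mul_distrib,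
    ← sum_neg_distrib, exp_sum]
  ring

/-- The Laguerre Selberg/Mehta integral: for `γ > -1`,
`∫_{(0,∞)^n} (∏_i λ_i^γ) ∏_{i<j} (λ_i - λ_j)² e^{-∑_i λ_i} dλ = ∏_{j=1}^n j! Γ(γ+j)`. -/
theorem stmt14 (γ : ℝ) (hγ : -1 < γ) (n : ℕ) :
    ∫ lam : Fin n → ℝ in Set.univ.pi (fun _ : Fin n => Set.Ioi (0 : ℝ)),
        (∏ i, lam i ^ γ) *
          (∏ p ∈ Finset.univ.filter (fun p : Fin n × Fin n => p.1 < p.2),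
            (lam p.1 - lam p.2) ^ 2) *
          Real.exp (-(∑ i, lam i)) =
      ∏ j ∈ Finset.range n, (Nat.factorial (j + 1) : ℝ) * Real.Gamma (γ + (j : ℝ) + 1) := by
  have hmoment : ∀ i j : ℕ,
      ∫ t in Ioi 0, t ^ γ * exp (-t) * t ^ i * t ^ j = Gamma (γ + 1 + (i + j : ℕ)) := by
    intro i j
    rw [add_right_comm]
    simpa only [pow_add, ← mul_assoc] using integral_rpow_mul_exp_neg_mul_pow hγ (i + j)
  have hGamma : ∀ m : ℕ, Gamma (γ + 1 + (m + 1 : ℕ)) = (γ + 1 + m) * Gamma (γ + 1 + m) :=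
    fun m => by
      rw [cast_succ, ← add_assoc, Gamma_add_one (by linarith [m.cast_nonneg (α := ℝ)])]
  have hfactorial : n ! * ∏ k ∈ range n, k ! = ∏ k ∈ range n, (k + 1)! := by
    rw [prod_range_factorial_succ, ← prod_range_succ_factorial, prod_range_succ, mul_comm]
  calc _ = ∫ lam : Fin n → ℝ,
          det (of fun i k : Fin n => lam k ^ γ * exp (-lam k) * lam k ^ (i : ℕ))
            * det (of fun i k : Fin n => lam k ^ (i : ℕ))
          ∂(Measure.pi fun _ => volume.restrict (Ioi 0)) := by
        rw [volume_pi, Measure.restrict_pi_pi]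
        simp_rw [laguerre_integrand_eq_det_mul_det]
    _ = n ! * det (of fun i j : Fin n =>
          ∫ t in Ioi 0, t ^ γ * exp (-t) * t ^ (i : ℕ) * t ^ (j : ℕ)) := by
        rw [integral_det_mul_det _ (fun (i : Fin n) t => t ^ γ * exp (-t) * t ^ (i : ℕ))
          (fun i t => t ^ (i : ℕ)) fun i j => ?_, Fintype.card_fin]
        simpa only [pow_add, ← mul_assoc, IntegrableOn]
          using integrableOn_rpow_mul_exp_neg_mul_pow hγ (i + j)
    _ = n ! * ∏ k ∈ range n, k ! * Gamma (γ + 1 + k) := by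
        simp_rw [hmoment, det_hankel_eq_prod_factorial_mul Gamma (γ + 1) hGamma]
    _ = _ := by
        rw [prod_mul_distrib, prod_mul_distrib, ← mul_assoc]
        congr 1
        · exact_mod_cast hfactorial
        · exact prod_congr rfl fun k _ => by ring_nf
end

section
/- For n ∈ ℕ and t > 0, the Gaussian Hankel-type integral satisfies ∫_{ℝ^n} ∏_{i<j} (λ_i − λ_j)² e^{−t ∑_i λ_i²} dλ = t^{−n²/2} π^{n/2} 2^{n(1−n)/2} ∏_{j=1}^n j!. -/
/-!
Write the Vandermonde determinant with the monic Hermite polynomials `He_0, …, He_{n-1}` in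
place of the monomials (column operations). Expanding `det²` as a double sum over permutations,
the integral against `∏ e^{-x_i²/2}` factors coordinatewise, and the orthogonality
`∫ He_j He_k e^{-x²/2} = δ_jk k! √(2π)` (integration by parts, since `He_k e^{-x²/2}` is
`(-1)^k` times the `k`-th derivative of `e^{-x²/2}`) leaves only the diagonal terms:
`n! ∏_{k<n} k! (2π)^{n/2}`. The substitution `λ = x / √(2t)` together with the homogeneity of
`det²` of degree `n(n-1)` supplies the factor `(2t)^{-n²/2}`.
-/

open Polynomial MeasureTheory Real Nat Matrix Finset

noncomputable def gaussian (x : ℝ) : ℝ := exp (-(x ^ 2 / 2))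

noncomputable def realHermite (n : ℕ) : ℝ[X] := (hermite n).map (algebraMap ℤ ℝ)

theorem realHermite_monic (n : ℕ) : (realHermite n).Monic := (hermite_monic n).map _

theorem natDegree_realHermite (n : ℕ) : (realHermite n).natDegree = n := by
  rw [realHermite, (hermite_monic n).natDegree_map, natDegree_hermite]

theorem iterate_deriv_gaussian (k : ℕ) :
    deriv^[k] gaussian = fun x => (-1) ^ k * (realHermite k).eval x * gaussian x := by
  ext x
  rw [realHermite, eval_map_algebraMap]
  exact deriv_gaussian_eq_hermite_mul_gaussian k x

theorem differentiable_iterate_deriv_gaussian (k : ℕ) :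
    Differentiable ℝ (deriv^[k] gaussian) := by
  rw [iterate_deriv_gaussian]
  unfold gaussian
  fun_prop

theorem integrable_eval_mul_gaussian (P : ℝ[X]) :
    Integrable (fun x => P.eval x * gaussian x) := by
  have hmonomial (k : ℕ) : Integrable (fun x : ℝ => x ^ k * gaussian x) := by
    refine (integrable_rpow_mul_exp_neg_mul_sq (b := 1 / 2) (by norm_num)
      (s := k) (by linarith [k.cast_nonneg (α := ℝ)])).congr (.of_forall fun x => ?_)
    simp only [rpow_natCast, gaussian]
    ring_nf
  simp_rw [eval_eq_sum_range, sum_mul, mul_assoc]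
  exact integrable_finsetSum _ fun k _ => (hmonomial k).const_mul _

theorem integrable_eval_mul_iterate_deriv_gaussian (P : ℝ[X]) (k : ℕ) :
    Integrable (fun x => P.eval x * deriv^[k] gaussian x) := by
  refine (integrable_eval_mul_gaussian (C ((-1) ^ k) * P * realHermite k)).congr
    (.of_forall fun x => ?_)
  simp only [iterate_deriv_gaussian, eval_mul, eval_C]
  ring

theorem integral_eval_mul_iterate_deriv_gaussian (P : ℝ[X]) (k : ℕ) :
    ∫ x, P.eval x * deriv^[k] gaussian x
      = (-1) ^ k * ∫ x, (derivative^[k] P).eval x * gaussian x := by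
  induction k generalizing P with
  | zero => simp
  | succ k ih =>
    have hderiv (x : ℝ) : HasDerivAt (deriv^[k] gaussian) (deriv^[k + 1] gaussian x) x := by
      rw [Function.iterate_succ_apply']
      exact (differentiable_iterate_deriv_gaussian k x).hasDerivAt
    rw [integral_mul_deriv_eq_deriv_mul_of_integrable (fun x _ => P.hasDerivAt x)
      (fun x _ => hderiv x) (integrable_eval_mul_iterate_deriv_gaussian P (k + 1))
      (integrable_eval_mul_iterate_deriv_gaussian _ k)
      (integrable_eval_mul_iterate_deriv_gaussian P k), ih, Function.iterate_succ_apply]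
    ring

theorem integral_gaussian_eq_sqrt_two_pi : ∫ x, gaussian x = √(2 * π) := by
  have h := integral_gaussian (1 / 2)
  rw [div_div_eq_mul_div, div_one, mul_comm] at h
  simp only [gaussian]
  convert h using 4
  ring

theorem iterate_derivative_eq_C_of_natDegree_le {R : Type*} [CommSemiring R] {P : R[X]}
    {k : ℕ} (h : P.natDegree ≤ k) : derivative^[k] P = C (k ! * P.coeff k) := by
  rw [eq_C_of_natDegree_le_zero ((natDegree_iterate_derivative P k).trans (by omega)),
    coeff_iterate_derivative, zero_add, Nat.descFactorial_self, nsmul_eq_mul]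

theorem integral_eval_mul_realHermite_mul_gaussian {P : ℝ[X]} {k : ℕ} (h : P.natDegree ≤ k) :
    ∫ x, P.eval x * (realHermite k).eval x * gaussian x = k ! * P.coeff k * √(2 * π) := by
  have hsign (x : ℝ) : P.eval x * (realHermite k).eval x * gaussian x
      = (-1) ^ k * (P.eval x * deriv^[k] gaussian x) := by
    rw [iterate_deriv_gaussian]
    ring_nf
    simp
  simp_rw [hsign, integral_const_mul, integral_eval_mul_iterate_deriv_gaussian,
    iterate_derivative_eq_C_of_natDegree_le h, eval_C, integral_const_mul,
    integral_gaussian_eq_sqrt_two_pi, ← mul_assoc, ← pow_add, ← two_mul, pow_mul]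
  simp

theorem integral_realHermite_mul_realHermite_mul_gaussian (m k : ℕ) :
    ∫ x, (realHermite m).eval x * (realHermite k).eval x * gaussian x
      = if m = k then k ! * √(2 * π) else 0 := by
  wlog hmk : m ≤ k generalizing m k
  · simp_rw [mul_comm ((realHermite m).eval _), this k m (by omega), eq_comm (a := k)]
    split_ifs with h <;> simp [h]
  rw [integral_eval_mul_realHermite_mul_gaussian ((natDegree_realHermite m).le.trans hmk)]
  rcases hmk.eq_or_lt with rfl | hlt
  · have hlead := (realHermite_monic m).coeff_natDegree
    rw [natDegree_realHermite] at hlead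
    simp [hlead]
  · rw [coeff_eq_zero_of_natDegree_lt ((natDegree_realHermite m).trans_lt hlt)]
    simp [hlt.ne]

theorem prod_ite_perm_apply_eq {ι M : Type*} [Fintype ι] [DecidableEq ι] [CommMonoidWithZero M]
    (σ τ : Equiv.Perm ι) (c : ι → M) :
    ∏ i, (if σ i = τ i then c (σ i) else 0) = if σ = τ then ∏ i, c i else 0 := by
  split_ifs with h
  · subst h
    simp only [if_true]
    exact Equiv.prod_comp σ c
  · obtain ⟨i, hi⟩ : ∃ i, σ i ≠ τ i := by
      by_contra! h'
      exact h (Equiv.ext h')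
    exact prod_eq_zero (mem_univ i) (if_neg hi)

theorem det_sq_mul_prod_eq_sum {ι α R : Type*} [Fintype ι] [DecidableEq ι] [CommRing R]
    (p : ι → α → R) (w : α → R) (x : ι → α) :
    det (of fun i j => p i (x j)) ^ 2 * ∏ i, w (x i)
      = ∑ σ : Equiv.Perm ι, ∑ τ : Equiv.Perm ι,
          (((Equiv.Perm.sign σ * Equiv.Perm.sign τ : ℤˣ) : ℤ) : R) *
            ∏ i, (p (σ i) (x i) * p (τ i) (x i) * w (x i)) := by
  rw [det_apply, sq, sum_mul_sum, sum_mul]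
  refine sum_congr rfl fun σ _ => ?_
  rw [sum_mul]
  refine sum_congr rfl fun τ _ => ?_
  simp only [of_apply, Units.smul_def, zsmul_eq_mul, prod_mul_distrib]
  push_cast
  ring

theorem integral_det_sq_mul_prod_of_orthogonal {ι α : Type*} [Fintype ι] [DecidableEq ι]
    [MeasurableSpace α] (μ : Measure α) [SigmaFinite μ]
    (p : ι → α → ℝ) (w : α → ℝ) (c : ι → ℝ)
    (hint : ∀ i j, Integrable (fun x => p i x * p j x * w x) μ)
    (horth : ∀ i j, ∫ x, p i x * p j x * w x ∂μ = if i = j then c i else 0) :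
    ∫ x, det (of fun i j => p i (x j)) ^ 2 * ∏ i, w (x i) ∂(Measure.pi fun _ => μ)
      = (Fintype.card ι)! * ∏ i, c i := by
  have hint_prod (σ τ : Equiv.Perm ι) : Integrable (fun x : ι → α =>
      ∏ i, (p (σ i) (x i) * p (τ i) (x i) * w (x i))) (Measure.pi fun _ => μ) :=
    Integrable.fintype_prod fun i => hint (σ i) (τ i)
  have hterm (σ τ : Equiv.Perm ι) :
      ∫ x, ∏ i, (p (σ i) (x i) * p (τ i) (x i) * w (x i)) ∂(Measure.pi fun _ => μ)
        = if σ = τ then ∏ i, c i else 0 := by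
    rw [integral_fintype_prod_eq_prod (f := fun i x => p (σ i) x * p (τ i) x * w x)]
    simp_rw [horth]
    exact prod_ite_perm_apply_eq σ τ c
  simp_rw [det_sq_mul_prod_eq_sum]
  rw [integral_finsetSum _ fun σ _ => integrable_finsetSum _ fun τ _ =>
    (hint_prod σ τ).const_mul _]
  simp_rw [integral_finsetSum _ fun τ _ => (hint_prod _ τ).const_mul _, integral_const_mul,
    hterm]
  simp only [mul_ite, mul_zero, sum_ite_eq, mem_univ, if_true, Int.units_mul_self,
    Units.val_one, Int.cast_one, one_mul, sum_const, nsmul_eq_mul]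
  rw [Finset.card_univ, Fintype.card_perm]

theorem prod_filter_lt_sub_sq_eq_det_vandermonde_sq {R : Type*} [CommRing R] {n : ℕ}
    (v : Fin n → R) :
    ∏ p ∈ univ.filter (fun p : Fin n × Fin n => p.1 < p.2), (v p.1 - v p.2) ^ 2
      = det (vandermonde v) ^ 2 := by
  rw [det_vandermonde, ← prod_pow, prod_filter, Fintype.prod_prod_type]
  refine prod_congr rfl fun i _ => ?_
  rw [← prod_pow, ← prod_filter]
  exact prod_congr (by ext; simp) fun j _ => by ring

theorem det_vandermonde_smul {R : Type*} [CommRing R] {n : ℕ} (c : R) (v : Fin n → R) :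
    det (vandermonde (c • v)) = c ^ (∑ i : Fin n, (i : ℕ)) * det (vandermonde v) := by
  have h : vandermonde (c • v) = vandermonde v * diagonal fun j : Fin n => c ^ (j : ℕ) := by
    ext i j
    simp [vandermonde_apply, mul_pow, mul_comm]
  rw [h, det_mul, det_diagonal, prod_pow_eq_pow_sum, mul_comm]

theorem two_mul_sum_fin_val_add (n : ℕ) : 2 * ∑ i : Fin n, (i : ℕ) + n = n ^ 2 := by
  rw [Fin.sum_univ_eq_sum_range (fun i => i), mul_comm, sum_range_id_mul_two]
  cases n with
  | zero => rfl
  | succ m => simp only [add_tsub_cancel_right]; ring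

theorem det_vandermonde_eq_det_realHermite {n : ℕ} (x : Fin n → ℝ) :
    det (vandermonde x) = det (of fun i j : Fin n => (realHermite i).eval (x j)) := by
  rw [det_eval_matrixOfPolynomials_eq_det_vandermonde x (fun j => realHermite j)
    (fun j => natDegree_realHermite j) (fun j => realHermite_monic j), ← det_transpose]
  rfl

theorem integral_det_vandermonde_sq_mul_gaussian (n : ℕ) :
    ∫ x : Fin n → ℝ, det (vandermonde x) ^ 2 * ∏ i, gaussian (x i)
      = n.superFactorial * √(2 * π) ^ n := by
  simp_rw [det_vandermonde_eq_det_realHermite]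
  rw [volume_pi, integral_det_sq_mul_prod_of_orthogonal volume
    (fun (i : Fin n) x => (realHermite i).eval x) gaussian (fun i => (i : ℕ)! * √(2 * π))
    (fun i j => (integrable_eval_mul_gaussian (realHermite i * realHermite j)).congr
      (.of_forall fun x => by simp [mul_assoc]))
    (fun i j => by
      simp_rw [integral_realHermite_mul_realHermite_mul_gaussian, Fin.val_inj]
      split_ifs with h <;> simp [h])]
  rw [prod_mul_distrib, prod_const, Finset.card_univ, Fintype.card_fin, ← mul_assoc,
    Fin.prod_univ_eq_prod_range (fun i => (i ! : ℝ)), ← prod_range_succ_factorial,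
    prod_range_succ]
  push_cast
  ring

theorem integral_det_vandermonde_sq_mul_exp {t : ℝ} (ht : 0 < t) (n : ℕ) :
    ∫ x : Fin n → ℝ, det (vandermonde x) ^ 2 * exp (-t * ∑ i, x i ^ 2)
      = (√(2 * t))⁻¹ ^ (n ^ 2) * (n.superFactorial * √(2 * π) ^ n) := by
  set c := (√(2 * t))⁻¹
  have hc : 0 < c := by positivity
  have htc : t * c ^ 2 = 1 / 2 := by
    rw [inv_pow, sq_sqrt (by positivity)]
    field_simp
  have hscale (x : Fin n → ℝ) :
      det (vandermonde (c • x)) ^ 2 * exp (-t * ∑ i, (c • x) i ^ 2)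
        = c ^ (2 * ∑ i : Fin n, (i : ℕ)) * (det (vandermonde x) ^ 2 * ∏ i, gaussian (x i)) := by
    rw [det_vandermonde_smul, mul_pow, ← pow_mul', mul_assoc]
    congr 2
    rw [mul_sum, exp_sum]
    refine prod_congr rfl fun i _ => ?_
    rw [gaussian, Pi.smul_apply, smul_eq_mul]
    congr 1
    linear_combination (-x i ^ 2) * htc
  have hsubst := Measure.integral_comp_smul (volume : Measure (Fin n → ℝ))
    (fun x => det (vandermonde x) ^ 2 * exp (-t * ∑ i, x i ^ 2)) c
  simp_rw [hscale, integral_const_mul, integral_det_vandermonde_sq_mul_gaussian,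
    Module.finrank_fin_fun, abs_inv, abs_pow, abs_of_pos hc, smul_eq_mul] at hsubst
  rw [eq_inv_mul_iff_mul_eq₀ (by positivity)] at hsubst
  rw [← two_mul_sum_fin_val_add n, pow_add, ← hsubst]
  ring

/-- Mehta's Gaussian integral: for `t > 0`,
`∫_{ℝ^n} ∏_{i<j} (λ_i - λ_j)² e^{-t ∑_i λ_i²} dλ
  = t^{-n²/2} π^{n/2} 2^{n(1-n)/2} ∏_{j=1}^n j!`. -/
theorem stmt15 (n : ℕ) (t : ℝ) (ht : 0 < t) :
    ∫ lam : Fin n → ℝ,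
        (∏ p ∈ Finset.univ.filter (fun p : Fin n × Fin n => p.1 < p.2),
          (lam p.1 - lam p.2) ^ 2) *
          Real.exp (-t * ∑ i, (lam i) ^ 2) =
      t ^ (-((n : ℝ) ^ 2) / 2) * Real.pi ^ ((n : ℝ) / 2) *
        (2 : ℝ) ^ ((n : ℝ) * (1 - (n : ℝ)) / 2) *
        ∏ j ∈ Finset.range n, (Nat.factorial (j + 1) : ℝ) := by
  simp_rw [prod_filter_lt_sub_sq_eq_det_vandermonde_sq]
  rw [integral_det_vandermonde_sq_mul_exp ht]
  have hscale : (√(2 * t))⁻¹ ^ (n ^ 2)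
      = 2 ^ (-((n : ℝ) ^ 2) / 2) * t ^ (-((n : ℝ) ^ 2) / 2) := by
    rw [sqrt_eq_rpow, ← rpow_neg_one, ← rpow_mul (by positivity), ← rpow_natCast,
      ← rpow_mul (by positivity), mul_rpow zero_le_two ht.le]
    push_cast
    ring_nf
  have hgauss : √(2 * π) ^ n = 2 ^ ((n : ℝ) / 2) * π ^ ((n : ℝ) / 2) := by
    rw [sqrt_eq_rpow, ← rpow_natCast, ← rpow_mul (by positivity),
      mul_rpow zero_le_two pi_pos.le]
    ring_nf
  have htwo : (2 : ℝ) ^ (-((n : ℝ) ^ 2) / 2) * 2 ^ ((n : ℝ) / 2)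
      = 2 ^ ((n : ℝ) * (1 - n) / 2) := by
    rw [← rpow_add two_pos]
    ring_nf
  rw [hscale, hgauss, ← htwo, ← Nat.cast_prod, prod_range_factorial_succ]
  ring
end
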